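/- Let A ∈ ℝ^{d×d} satisfy ‖I_d − AᵀA‖ < 1 in operator norm (so A is invertible). Define S_0 = A and S_{t+1} = ½·S_t·(3I_d − S_tᵀS_t) for t ≥ 0. Then S_t → sgn(A) as t → ∞, and for every t ∈ ℕ, ‖S_t − sgn(A)‖ ≤ ‖I_d − S_tᵀS_t‖ ≤ ‖I_d − AᵀA‖^{2^t}. -/

import Mathlib

open Matrix MeasureTheory ProbabilityTheory

noncomputable section

/-- Frobenius norm of a real matrix. -/
def frob {m k : Type*} [Fintype m] [Fintype k] (A : Matrix m k ℝ) : ℝ :=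
  Real.sqrt (∑ i, ∑ j, (A i j) ^ 2)

/-- Spectral (operator) norm of a real matrix: the `ℓ² → ℓ²` operator norm. -/
def spec {m k : Type*} [Fintype m] [Fintype k] [DecidableEq k] (A : Matrix m k ℝ) : ℝ :=
  ‖LinearMap.toContinuousLinearMap (Matrix.toEuclideanLin A)‖

/-- Smallest singular value of a real matrix. -/
def sigmaMin {m k : Type*} [Fintype m] [Fintype k] [DecidableEq k] (A : Matrix m k ℝ) : ℝ :=
  ⨅ x : {x : EuclideanSpace ℝ k // ‖x‖ = 1}, ‖Matrix.toEuclideanLin A x.1‖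

/-- Nuclear norm (sum of singular values) of a square real matrix. -/
def nuclearNorm {d : ℕ} (A : Matrix (Fin d) (Fin d) ℝ) : ℝ :=
  ∑ i, Real.sqrt ((show (Aᵀ * A).IsHermitian by
    simpa using Matrix.isHermitian_conjTranspose_mul_self A).eigenvalues i)

/-- `Q` is a `d × d` real orthogonal matrix. -/
def IsOrtho {d : ℕ} (Q : Matrix (Fin d) (Fin d) ℝ) : Prop :=
  Qᵀ * Q = 1 ∧ Q * Qᵀ = 1

open scoped ComplexOrder in
/-- The positive semidefinite square root of a positive semidefinite matrix
(the definition `Matrix.PosSemidef.sqrt` of the older Mathlib, since removed). -/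
def Matrix.PosSemidef.sqrt {n 𝕜 : Type*} [Fintype n] [DecidableEq n] [RCLike 𝕜]
    {A : Matrix n n 𝕜} (hA : A.PosSemidef) : Matrix n n 𝕜 :=
  hA.1.eigenvectorUnitary.1 * diagonal ((↑) ∘ (Real.sqrt ·) ∘ hA.1.eigenvalues) *
    (star hA.1.eigenvectorUnitary : Matrix n n 𝕜)

open scoped Classical in
/-- The matrix sign function `sgn(A) = A (AᵀA)^{-1/2} = U Vᵀ` for `A = U Σ Vᵀ`
(junk value if `AᵀA` is not positive semidefinite, which never happens over `ℝ`). -/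
def msgn {d : ℕ} (A : Matrix (Fin d) (Fin d) ℝ) : Matrix (Fin d) (Fin d) ℝ :=
  if h : (Aᵀ * A).PosSemidef then A * (h.sqrt)⁻¹ else 1

/-- The `i`-th `d × d` block of an `nd × d` block matrix. -/
def blk {d n : ℕ} (X : Matrix (Fin n × Fin d) (Fin d) ℝ) (i : Fin n) :
    Matrix (Fin d) (Fin d) ℝ :=
  Matrix.of fun a b => X (i, a) b

/-- `X ∈ O(d)^{⊗n}`: every `d × d` block of `X` is orthogonal. -/
def BlockOrtho {d n : ℕ} (X : Matrix (Fin n × Fin d) (Fin d) ℝ) : Prop :=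
  ∀ i, IsOrtho (blk X i)

/-- Blockwise matrix sign function on `nd × d` block matrices. -/
def bsgn {d n : ℕ} (X : Matrix (Fin n × Fin d) (Fin d) ℝ) :
    Matrix (Fin n × Fin d) (Fin d) ℝ :=
  Matrix.of fun p b => msgn (blk X p.1) p.2 b

/-- `d_F(X, Y) = min_{Q ∈ O(d)} ‖X - Y Q‖_F`. -/
def dF {d n : ℕ} (X Y : Matrix (Fin n × Fin d) (Fin d) ℝ) : ℝ :=
  ⨅ Q : {Q : Matrix (Fin d) (Fin d) ℝ // IsOrtho Q}, frob (X - Y * Q.1)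

/-- The `(i, j)` block of an `nd × nd` block matrix. -/
def blk2 {d n : ℕ} (A : Matrix (Fin n × Fin d) (Fin n × Fin d) ℝ) (i j : Fin n) :
    Matrix (Fin d) (Fin d) ℝ :=
  Matrix.of fun a b => A (i, a) (j, b)

/-- The `l`-th `nd × d` block column of an `nd × nd` block matrix. -/
def bcol {d n : ℕ} (W : Matrix (Fin n × Fin d) (Fin n × Fin d) ℝ) (l : Fin n) :
    Matrix (Fin n × Fin d) (Fin d) ℝ :=
  Matrix.of fun p b => W p (l, b)

/-- Projection onto the tangent space of `O(d)` at `X`: `P_{T_X}(G) = (G - X Gᵀ X)/2`. -/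
def tanProj {d : ℕ} (X G : Matrix (Fin d) (Fin d) ℝ) : Matrix (Fin d) (Fin d) ℝ :=
  (1 / 2 : ℝ) • (G - X * Gᵀ * X)

/-- The `i`-th block of the Euclidean gradient: `G_i = ∑_{j ≠ i} (X_i - A_{ij} X_j)`. -/
def Gblk {d n : ℕ} (A : Matrix (Fin n × Fin d) (Fin n × Fin d) ℝ)
    (X : Matrix (Fin n × Fin d) (Fin d) ℝ) (i : Fin n) : Matrix (Fin d) (Fin d) ℝ :=
  ∑ j ∈ Finset.univ.erase i, (blk X i - blk2 A i j * blk X j)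

/-- One Riemannian gradient step before retraction:
`F_i = X_i - μ P_{T_{X_i}}(G_i)`, assembled as an `nd × d` block matrix. -/
def Fstep {d n : ℕ} (A : Matrix (Fin n × Fin d) (Fin n × Fin d) ℝ) (μ : ℝ)
    (X : Matrix (Fin n × Fin d) (Fin d) ℝ) : Matrix (Fin n × Fin d) (Fin d) ℝ :=
  Matrix.of fun p b => (blk X p.1 - μ • tanProj (blk X p.1) (Gblk A X p.1)) p.2 b

/-- `Y` is an orthonormal matrix of eigenvectors for the top `d` eigenvalues of the
symmetric matrix `A`: its columns are orthonormal, its range is `A`-invariant, and the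
Rayleigh quotient on its range dominates the Rayleigh quotient on its orthogonal
complement. -/
def IsTopEigvecs {d n : ℕ} (A : Matrix (Fin n × Fin d) (Fin n × Fin d) ℝ)
    (Y : Matrix (Fin n × Fin d) (Fin d) ℝ) : Prop :=
  Yᵀ * Y = 1 ∧ (∃ Λ : Matrix (Fin d) (Fin d) ℝ, A * Y = Y * Λ) ∧
  ∀ v w : (Fin n × Fin d) → ℝ, (∃ c : Fin d → ℝ, v = Y.mulVec c) → Yᵀ.mulVec w = 0 →
    (w ⬝ᵥ w) * (v ⬝ᵥ A.mulVec v) ≥ (v ⬝ᵥ v) * (w ⬝ᵥ A.mulVec w)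

/-- `W` is the symmetric block Gaussian noise matrix: `W` is symmetric, its diagonal
blocks vanish, each entry in an off-diagonal block `W_{ij}` (`i < j`) is standard
Gaussian, and all these entries (over all blocks with `i < j`) are mutually
independent. -/
def IsGaussianNoise {d n : ℕ} {Ω : Type*} [MeasurableSpace Ω] (P : Measure Ω)
    (W : Ω → Matrix (Fin n × Fin d) (Fin n × Fin d) ℝ) : Prop :=
  (∀ p q, Measurable fun ω => W ω p q) ∧
  (∀ ω, (W ω)ᵀ = W ω) ∧
  (∀ ω (i : Fin n) (a b : Fin d), W ω (i, a) (i, b) = 0) ∧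
  (∀ (i j : Fin n) (a b : Fin d), i < j →
    P.map (fun ω => W ω (i, a) (j, b)) = gaussianReal 0 1) ∧
  iIndepFun
    (fun (e : {x : (Fin n × Fin d) × (Fin n × Fin d) // x.1.1 < x.2.1}) ω =>
      W ω e.1.1 e.1.2) P

/-- Leave-one-out noise: set the `l`-th block row and block column of `W` to zero. -/
def looNoise {d n : ℕ} (W : Matrix (Fin n × Fin d) (Fin n × Fin d) ℝ) (l : Fin n) :
    Matrix (Fin n × Fin d) (Fin n × Fin d) ℝ :=
  Matrix.of fun p q => if p.1 = l ∨ q.1 = l then 0 else W p q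

/-- The Newton–Schulz iteration `S_0 = A`, `S_{t+1} = ½ S_t (3 I - S_tᵀ S_t)`. -/
def nsIter {d : ℕ} (A : Matrix (Fin d) (Fin d) ℝ) : ℕ → Matrix (Fin d) (Fin d) ℝ
  | 0 => A
  | (t + 1) => (1 / 2 : ℝ) • (nsIter A t * ((3 : ℝ) • (1 : Matrix (Fin d) (Fin d) ℝ) - (nsIter A t)ᵀ * nsIter A t))

/-!
Diagonalise `AᵀA = U diag(λ) Uᵀ` and put `ν = √λ`, so that `A = Q · U diag(ν) Uᵀ` with
`Q = sgn A` orthogonal. By induction `S_t = Q · U diag(f^[t] ν) Uᵀ` for the scalar map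
`f x = x (3 - x²) / 2`, and the spectral norm of `U diag(w) Uᵀ` is the sup-norm of `w`. So both
inequalities reduce to scalar facts: `1 - f(x)² = (1 - x²)² (3 + (1 - x²)) / 4` squares the
defect while `|1 - x²| ≤ 1`, and `|x - 1| ≤ |1 - x²|` for `x ≥ 0`.
-/

def nsStep (x : ℝ) : ℝ := x * (3 - x ^ 2) / 2

lemma one_sub_nsStep_sq (x : ℝ) :
    1 - nsStep x ^ 2 = (1 - x ^ 2) ^ 2 * (3 + (1 - x ^ 2)) / 4 := by
  unfold nsStep; ring

lemma nsStep_nonneg {x : ℝ} (hx₀ : 0 ≤ x) (hx : |1 - x ^ 2| ≤ 1) : 0 ≤ nsStep x := by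
  have hx₂ : x ^ 2 ≤ 2 := by linarith [(abs_le.mp hx).1]
  unfold nsStep
  nlinarith

lemma abs_one_sub_nsStep_sq_le {x : ℝ} (hx : |1 - x ^ 2| ≤ 1) :
    |1 - nsStep x ^ 2| ≤ |1 - x ^ 2| ^ 2 := by
  obtain ⟨hlo, hhi⟩ := abs_le.mp hx
  have h4 : |3 + (1 - x ^ 2)| ≤ 4 := abs_le.mpr ⟨by linarith, by linarith⟩
  rw [one_sub_nsStep_sq, abs_div, abs_mul, abs_pow, abs_of_pos (by norm_num : (0 : ℝ) < 4)]
  rw [div_le_iff₀ (by norm_num)]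
  nlinarith [pow_nonneg (abs_nonneg (1 - x ^ 2)) 2]

lemma nsStep_iterate_nonneg_and_abs_one_sub_sq_le {x : ℝ} (hx₀ : 0 ≤ x) (hx : |1 - x ^ 2| ≤ 1)
    (t : ℕ) :
    0 ≤ nsStep^[t] x ∧ |1 - (nsStep^[t] x) ^ 2| ≤ |1 - x ^ 2| ^ 2 ^ t := by
  induction t with
  | zero => simp [hx₀]
  | succ t ih =>
    obtain ⟨hy₀, hy⟩ := ih
    have hy₁ : |1 - (nsStep^[t] x) ^ 2| ≤ 1 := hy.trans (pow_le_one₀ (abs_nonneg _) hx)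
    rw [Function.iterate_succ_apply']
    refine ⟨nsStep_nonneg hy₀ hy₁, (abs_one_sub_nsStep_sq_le hy₁).trans ?_⟩
    rw [pow_succ 2 t, pow_mul]
    exact pow_le_pow_left₀ (abs_nonneg _) hy 2

lemma abs_sub_one_le_abs_one_sub_sq {x : ℝ} (hx : 0 ≤ x) : |x - 1| ≤ |1 - x ^ 2| := by
  rw [show 1 - x ^ 2 = -((x - 1) * (x + 1)) by ring, abs_neg, abs_mul,
    abs_of_pos (by linarith : 0 < x + 1)]
  nlinarith [abs_nonneg (x - 1)]

lemma tendsto_of_norm_sub_le_pow_two_pow {E : Type*} [SeminormedAddCommGroup E] {f : ℕ → E}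
    {a : E} {r : ℝ} (hr₀ : 0 ≤ r) (hr : r < 1) (hf : ∀ t, ‖f t - a‖ ≤ r ^ 2 ^ t) :
    Filter.Tendsto f Filter.atTop (nhds a) := by
  rw [tendsto_iff_norm_sub_tendsto_zero]
  refine squeeze_zero (fun _ => norm_nonneg _) hf ?_
  exact (tendsto_pow_atTop_nhds_zero_of_lt_one hr₀ hr).comp
    (tendsto_pow_atTop_atTop_of_one_lt one_lt_two)

section L2

open scoped Matrix.Norms.L2Operator

variable {n : Type*} [Fintype n] [DecidableEq n]

lemma spec_eq_norm {m k : Type*} [Fintype m] [Fintype k] [DecidableEq k] (A : Matrix m k ℝ) :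
    spec A = ‖A‖ :=
  rfl

lemma norm_mul_of_transpose_mul_self_eq_one {Q : Matrix n n ℝ} (hQ : Qᵀ * Q = 1)
    (X : Matrix n n ℝ) : ‖Q * X‖ = ‖X‖ :=
  CStarRing.norm_mem_unitary_mul X (Matrix.mem_unitaryGroup_iff'.mpr hQ)

/-- `v ↦ U diag(v) Uᵀ`. Being an `ℝ`-algebra hom, it turns the scalar iteration on `v` into the
matrix iteration on `U diag(v) Uᵀ`. -/
def conjDiagonal (U : unitary (Matrix n n ℝ)) : (n → ℝ) →ₐ[ℝ] Matrix n n ℝ :=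
  (Unitary.conjStarAlgAut ℝ (Matrix n n ℝ) U).toAlgEquiv.toAlgHom.comp (diagonalAlgHom ℝ)

lemma conjDiagonal_apply (U : unitary (Matrix n n ℝ)) (v : n → ℝ) :
    conjDiagonal U v = U * diagonal v * star (U : Matrix n n ℝ) := rfl

lemma transpose_conjDiagonal (U : unitary (Matrix n n ℝ)) (v : n → ℝ) :
    (conjDiagonal U v)ᵀ = conjDiagonal U v := by
  simp [conjDiagonal_apply, Matrix.star_eq_conjTranspose, Matrix.mul_assoc]

lemma norm_conjDiagonal (U : unitary (Matrix n n ℝ)) (v : n → ℝ) :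
    ‖conjDiagonal U v‖ = ‖v‖ := by
  rw [conjDiagonal_apply, ← Unitary.coe_star, CStarRing.norm_mul_coe_unitary,
    CStarRing.norm_coe_unitary_mul, l2_opNorm_diagonal]

lemma Matrix.IsHermitian.eq_conjDiagonal {M : Matrix n n ℝ} (hM : M.IsHermitian) :
    M = conjDiagonal hM.eigenvectorUnitary hM.eigenvalues := by
  conv_lhs => rw [hM.spectral_theorem]
  simp [conjDiagonal_apply]

lemma Matrix.PosSemidef.sqrt_eq_conjDiagonal {M : Matrix n n ℝ} (hM : M.PosSemidef) :
    hM.sqrt = conjDiagonal hM.1.eigenvectorUnitary (Real.sqrt ∘ hM.1.eigenvalues) := by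
  simp [Matrix.PosSemidef.sqrt, conjDiagonal_apply]

lemma Matrix.PosSemidef.sqrt_mul_sqrt {M : Matrix n n ℝ} (hM : M.PosSemidef) :
    hM.sqrt * hM.sqrt = M := by
  conv_rhs => rw [hM.1.eq_conjDiagonal]
  rw [hM.sqrt_eq_conjDiagonal, ← map_mul]
  congr 1
  funext i
  exact Real.mul_self_sqrt (hM.eigenvalues_nonneg i)

lemma Matrix.PosDef.isUnit_det_sqrt {M : Matrix n n ℝ} (hM : M.PosDef) :
    IsUnit hM.posSemidef.sqrt.det := by
  rw [hM.posSemidef.sqrt_eq_conjDiagonal]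
  refine Matrix.isUnit_det_of_right_inverse
    (B := conjDiagonal hM.1.eigenvectorUnitary (Real.sqrt ∘ hM.1.eigenvalues)⁻¹) ?_
  rw [← map_mul, ← map_one (conjDiagonal hM.1.eigenvectorUnitary)]
  congr 1
  funext i
  exact mul_inv_cancel₀ (Real.sqrt_pos.mpr (hM.eigenvalues_pos i)).ne'

lemma Matrix.IsHermitian.posDef_of_norm_one_sub_lt_one {M : Matrix n n ℝ}
    (hM : M.IsHermitian) (h : ‖1 - M‖ < 1) : M.PosDef := by
  rw [hM.posDef_iff_eigenvalues_pos]
  intro i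
  rw [hM.eq_conjDiagonal, ← map_one (conjDiagonal _), ← map_sub, norm_conjDiagonal] at h
  have hi := (norm_le_pi_norm (1 - hM.eigenvalues) i).trans_lt h
  rw [Pi.sub_apply, Pi.one_apply, Real.norm_eq_abs] at hi
  linarith [(abs_lt.mp hi).2]

variable {Q : Matrix n n ℝ} (hQ : Qᵀ * Q = 1) (U : unitary (Matrix n n ℝ))
include hQ

lemma transpose_mul_self_mul_conjDiagonal (v : n → ℝ) :
    (Q * conjDiagonal U v)ᵀ * (Q * conjDiagonal U v) = conjDiagonal U (v ^ 2) := by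
  rw [Matrix.transpose_mul, transpose_conjDiagonal, Matrix.mul_assoc, ← Matrix.mul_assoc Qᵀ, hQ,
    Matrix.one_mul, map_pow, sq]

lemma norm_one_sub_transpose_mul_self_mul_conjDiagonal (v : n → ℝ) :
    ‖1 - (Q * conjDiagonal U v)ᵀ * (Q * conjDiagonal U v)‖ = ‖1 - v ^ 2‖ := by
  rw [transpose_mul_self_mul_conjDiagonal hQ, ← map_one (conjDiagonal U), ← map_sub,
    norm_conjDiagonal]

lemma norm_mul_conjDiagonal_sub_le {v : n → ℝ} (hv : ∀ i, 0 ≤ v i) :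
    ‖Q * conjDiagonal U v - Q‖ ≤ ‖1 - (Q * conjDiagonal U v)ᵀ * (Q * conjDiagonal U v)‖ := by
  have hsub : Q * conjDiagonal U v - Q = Q * conjDiagonal U (v - 1) := by
    rw [map_sub, map_one, Matrix.mul_sub, Matrix.mul_one]
  rw [hsub, norm_mul_of_transpose_mul_self_eq_one hQ, norm_conjDiagonal,
    norm_one_sub_transpose_mul_self_mul_conjDiagonal hQ]
  refine (pi_norm_le_iff_of_nonneg (norm_nonneg _)).2 fun i => ?_
  calc ‖(v - 1) i‖ = |v i - 1| := rfl
    _ ≤ |1 - v i ^ 2| := abs_sub_one_le_abs_one_sub_sq (hv i)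
    _ = ‖(1 - v ^ 2 : n → ℝ) i‖ := rfl
    _ ≤ ‖1 - v ^ 2‖ := norm_le_pi_norm _ i

end L2

section msgn

variable {d : ℕ} {A : Matrix (Fin d) (Fin d) ℝ} (hA : (Aᵀ * A).PosDef)
include hA

lemma msgn_eq_mul_inv_sqrt : msgn A = A * hA.posSemidef.sqrt⁻¹ := by
  rw [msgn, dif_pos hA.posSemidef]

lemma msgn_mul_sqrt : msgn A * hA.posSemidef.sqrt = A := by
  rw [msgn_eq_mul_inv_sqrt hA]
  exact Matrix.nonsing_inv_mul_cancel_right _ _ hA.isUnit_det_sqrt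

lemma transpose_msgn_mul_msgn : (msgn A)ᵀ * msgn A = 1 := by
  have hdet := hA.isUnit_det_sqrt
  have hsymm : hA.posSemidef.sqrtᵀ = hA.posSemidef.sqrt := by
    rw [hA.posSemidef.sqrt_eq_conjDiagonal, transpose_conjDiagonal]
  have hsq := hA.posSemidef.sqrt_mul_sqrt
  rw [msgn_eq_mul_inv_sqrt hA]
  set R := hA.posSemidef.sqrt
  rw [Matrix.transpose_mul, Matrix.transpose_nonsing_inv, hsymm,
    Matrix.mul_assoc, ← Matrix.mul_assoc Aᵀ, ← hsq,
    Matrix.mul_assoc R, Matrix.mul_nonsing_inv _ hdet, Matrix.mul_one,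
    Matrix.nonsing_inv_mul _ hdet]

end msgn

section newtonSchulz

open scoped Matrix.Norms.L2Operator

variable {d : ℕ} {A Q : Matrix (Fin d) (Fin d) ℝ} (hQ : Qᵀ * Q = 1)
  {U : unitary (Matrix (Fin d) (Fin d) ℝ)} {v : Fin d → ℝ} (hA : A = Q * conjDiagonal U v)
include hQ hA

lemma nsIter_eq_mul_conjDiagonal (t : ℕ) :
    nsIter A t = Q * conjDiagonal U (nsStep^[t] ∘ v) := by
  induction t with
  | zero => simpa [nsIter] using hA
  | succ t ih =>
    have hstep : nsStep ∘ (nsStep^[t] ∘ v) =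
        (1 / 2 : ℝ) • ((nsStep^[t] ∘ v) * ((3 : ℝ) • 1 - (nsStep^[t] ∘ v) ^ 2)) := by
      funext i
      simp only [Function.comp_apply, nsStep, Pi.smul_apply, Pi.mul_apply, Pi.sub_apply,
        Pi.one_apply, Pi.pow_apply, smul_eq_mul]
      ring
    rw [nsIter, ih, transpose_mul_self_mul_conjDiagonal hQ, Function.iterate_succ',
      Function.comp_assoc, hstep]
    simp only [map_smul, map_mul, map_sub, map_one, map_pow, Matrix.mul_smul, Matrix.mul_assoc]

variable (hv : ∀ i, 0 ≤ v i) (h : ‖1 - Aᵀ * A‖ ≤ 1)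
include hv h

lemma norm_one_sub_transpose_mul_self_nsIter_le (t : ℕ) :
    ‖1 - (nsIter A t)ᵀ * nsIter A t‖ ≤ ‖1 - Aᵀ * A‖ ^ 2 ^ t := by
  rw [nsIter_eq_mul_conjDiagonal hQ hA, hA, norm_one_sub_transpose_mul_self_mul_conjDiagonal hQ,
    norm_one_sub_transpose_mul_self_mul_conjDiagonal hQ]
  rw [hA, norm_one_sub_transpose_mul_self_mul_conjDiagonal hQ] at h
  refine (pi_norm_le_iff_of_nonneg (by positivity)).2 fun i => ?_
  have hi : |1 - v i ^ 2| ≤ ‖1 - v ^ 2‖ := norm_le_pi_norm (1 - v ^ 2) i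
  calc ‖(1 - (nsStep^[t] ∘ v) ^ 2 : Fin d → ℝ) i‖ = |1 - (nsStep^[t] (v i)) ^ 2| := rfl
    _ ≤ |1 - v i ^ 2| ^ 2 ^ t :=
      (nsStep_iterate_nonneg_and_abs_one_sub_sq_le (hv i) (hi.trans h) t).2
    _ ≤ ‖1 - v ^ 2‖ ^ 2 ^ t := pow_le_pow_left₀ (abs_nonneg _) hi _

lemma norm_nsIter_sub_le (t : ℕ) :
    ‖nsIter A t - Q‖ ≤ ‖1 - (nsIter A t)ᵀ * nsIter A t‖ := by
  rw [hA, norm_one_sub_transpose_mul_self_mul_conjDiagonal hQ] at h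
  have hvi (i : Fin d) : |1 - v i ^ 2| ≤ 1 := (norm_le_pi_norm (1 - v ^ 2) i).trans h
  rw [nsIter_eq_mul_conjDiagonal hQ hA]
  exact norm_mul_conjDiagonal_sub_le hQ U fun i =>
    (nsStep_iterate_nonneg_and_abs_one_sub_sq_le (hv i) (hvi i) t).1

end newtonSchulz

/-- If `‖I - AᵀA‖ < 1` (operator norm), then the Newton–Schulz iterates
converge to `sgn A`, with `‖S_t - sgn A‖ ≤ ‖I - S_tᵀ S_t‖ ≤ ‖I - AᵀA‖ ^ (2 ^ t)`. -/
theorem newton_schulz_convergence {d : ℕ} (A : Matrix (Fin d) (Fin d) ℝ)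
    (hA : spec ((1 : Matrix (Fin d) (Fin d) ℝ) - Aᵀ * A) < 1) :
    Filter.Tendsto (nsIter A) Filter.atTop (nhds (msgn A)) ∧
    ∀ t : ℕ,
      spec (nsIter A t - msgn A)
          ≤ spec ((1 : Matrix (Fin d) (Fin d) ℝ) - (nsIter A t)ᵀ * nsIter A t) ∧
      spec ((1 : Matrix (Fin d) (Fin d) ℝ) - (nsIter A t)ᵀ * nsIter A t)
          ≤ spec ((1 : Matrix (Fin d) (Fin d) ℝ) - Aᵀ * A) ^ (2 ^ t) := by
  open scoped Matrix.Norms.L2Operator in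
  simp only [spec_eq_norm] at hA ⊢
  have hM : (Aᵀ * A).PosDef :=
    (by simpa using isHermitian_conjTranspose_mul_self A : (Aᵀ * A).IsHermitian)
      |>.posDef_of_norm_one_sub_lt_one hA
  have hQ := transpose_msgn_mul_msgn hM
  have hAQ := (msgn_mul_sqrt hM).symm
  rw [hM.posSemidef.sqrt_eq_conjDiagonal] at hAQ
  have hν (i : Fin d) : 0 ≤ (Real.sqrt ∘ hM.1.eigenvalues) i := Real.sqrt_nonneg _
  have hdist := norm_nsIter_sub_le hQ hAQ hν hA.le
  have hrate := norm_one_sub_transpose_mul_self_nsIter_le hQ hAQ hν hA.le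
  refine ⟨?_, fun t => ⟨hdist t, hrate t⟩⟩
  exact tendsto_of_norm_sub_le_pow_two_pow (norm_nonneg _) hA fun t => (hdist t).trans (hrate t)
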